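/- Let u, k ∈ K⁴ be nonzero with u₀u₃ = u₁u₂, and let φ = ρ(u,k) ∈ Z₁ ∩ Z₂. Then the subspace 𝒢_φ = {ψ ∈ M₄(K) : (φw)₃(ψw)₀ − (φw)₂(ψw)₁ − (φw)₁(ψw)₂ + (φw)₀(ψw)₃ = 0 for all w ∈ K⁴} of M₄(K) has dimension 12 over K (so, projectively, the fiber of the bundle 𝒢 over Z₁ ∩ Z₂ has rank 11). -/

import Mathlib

/-!
Since `ρ(u,k) w = (k ⬝ w) u`, the condition defining `𝒢_φ` reads
`(k ⬝ w) * ((∇Q(u) ᵥ* ψ) ⬝ w) = 0` for all `w`. A product of two linear forms vanishes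
identically only if one factor does, so for `k ≠ 0` the fiber `𝒢_φ` is the kernel of
`ψ ↦ ∇Q(u) ᵥ* ψ`, which maps `M₄(K)` onto `K⁴` because `∇Q(u) ≠ 0`. Hence `dim 𝒢_φ = 16 - 4`.
-/

variable {K : Type*} [Field K]

/-- The rank-one matrix `ρ(u,k)ᵢⱼ = uᵢkⱼ`. -/
def rho (u k : Fin 4 → K) : Matrix (Fin 4) (Fin 4) K :=
  Matrix.of fun i j => u i * k j

/-- The intersection `𝒢_φ` of the tangent spaces at `φ` to all point conditions of
the quadric `Q = V(x₀x₃ - x₁x₂)`. -/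
def Gfiber (φ : Matrix (Fin 4) (Fin 4) K) : Set (Matrix (Fin 4) (Fin 4) K) :=
  {ψ | ∀ w : Fin 4 → K,
    φ.mulVec w 3 * ψ.mulVec w 0 - φ.mulVec w 2 * ψ.mulVec w 1
      - φ.mulVec w 1 * ψ.mulVec w 2 + φ.mulVec w 0 * ψ.mulVec w 3 = 0}

open Matrix

/-- The gradient `∇Q(y)` of `x₀x₃ - x₁x₂` at `y`. -/
def quadricGrad (y : Fin 4 → K) : Fin 4 → K :=
  ![y 3, -y 2, -y 1, y 0]

lemma quadricGrad_smul (c : K) (y : Fin 4 → K) : quadricGrad (c • y) = c • quadricGrad y := by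
  ext i; fin_cases i <;> simp [quadricGrad]

lemma quadricGrad_ne_zero {y : Fin 4 → K} (hy : y ≠ 0) : quadricGrad y ≠ 0 := by
  contrapose! hy
  ext i
  have h := congrFun hy i.rev
  fin_cases i <;> simpa [quadricGrad] using h

lemma mem_Gfiber_iff (φ ψ : Matrix (Fin 4) (Fin 4) K) :
    ψ ∈ Gfiber φ ↔ ∀ w, quadricGrad (φ *ᵥ w) ⬝ᵥ ψ *ᵥ w = 0 := by
  refine forall_congr' fun w => Eq.congr_left ?_
  simp [quadricGrad, dotProduct, Fin.sum_univ_four]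
  ring

lemma rho_mulVec (u k w : Fin 4 → K) : rho u k *ᵥ w = (k ⬝ᵥ w) • u := by
  ext i
  simp only [rho, mulVec, dotProduct, of_apply, Pi.smul_apply, smul_eq_mul, Finset.sum_mul]
  exact Finset.sum_congr rfl fun _ _ => by ring

section

variable {ι : Type*} [Fintype ι]

lemma eq_zero_of_forall_dotProduct_mul_dotProduct_eq_zero [DecidableEq ι] {k c : ι → K}
    (hk : k ≠ 0) (h : ∀ w, (k ⬝ᵥ w) * (c ⬝ᵥ w) = 0) : c = 0 := by
  obtain ⟨j₀, hj₀⟩ := Function.ne_iff.mp hk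
  rw [Pi.zero_apply] at hj₀
  have hc₀ : c j₀ = 0 := by simpa [hj₀] using h (Pi.single j₀ 1)
  ext j
  have hj : k j * c j = 0 := by simpa using h (Pi.single j 1)
  have hsum : (k j + k j₀) * (c j + c j₀) = 0 := by
    have := h (Pi.single j 1 + Pi.single j₀ 1)
    rw [dotProduct_add, dotProduct_add] at this
    simpa only [dotProduct_single, mul_one] using this
  have : k j₀ * c j = 0 := by linear_combination hsum - hj - (k j + k j₀) * hc₀
  simpa [hj₀] using this

lemma vecMulBilin_surjective {μ : Type*} {v : ι → K} (hv : v ≠ 0) :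
    Function.Surjective (vecMulBilin K K v : Matrix ι μ K →ₗ[K] μ → K) := by
  classical
  obtain ⟨i, hi⟩ := Function.ne_iff.mp hv
  refine fun x => ⟨vecMulVec (Pi.single i (v i)⁻¹) x, ?_⟩
  rw [vecMulBilin_apply, vecMul_vecMulVec, dotProduct_single, mul_inv_cancel₀ hi, one_smul]

lemma finrank_ker_vecMulBilin_add {μ : Type*} [Fintype μ] {v : ι → K} (hv : v ≠ 0) :
    Module.finrank K (LinearMap.ker (vecMulBilin K K v : Matrix ι μ K →ₗ[K] μ → K))
      + Fintype.card μ = Fintype.card ι * Fintype.card μ := by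
  have h := LinearMap.finrank_range_add_finrank_ker (vecMulBilin K K v : Matrix ι μ K →ₗ[K] μ → K)
  rw [LinearMap.range_eq_top.mpr (vecMulBilin_surjective hv), finrank_top] at h
  simp only [Module.finrank_fintype_fun_eq_card, Module.finrank_matrix,
    Module.finrank_self, mul_one] at h
  omega

end

lemma Gfiber_rho {k : Fin 4 → K} (hk : k ≠ 0) (u : Fin 4 → K) :
    Gfiber (rho u k) =
      (LinearMap.ker (vecMulBilin K K (quadricGrad u) : Matrix (Fin 4) (Fin 4) K →ₗ[K] _) :
        Set (Matrix (Fin 4) (Fin 4) K)) := by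
  ext ψ
  have factor : ∀ w, quadricGrad (rho u k *ᵥ w) ⬝ᵥ ψ *ᵥ w
      = (k ⬝ᵥ w) * (quadricGrad u ᵥ* ψ ⬝ᵥ w) := fun w => by
    rw [rho_mulVec, quadricGrad_smul, smul_dotProduct, dotProduct_mulVec, smul_eq_mul]
  simp only [mem_Gfiber_iff, factor, SetLike.mem_coe, LinearMap.mem_ker, vecMulBilin_apply]
  refine ⟨eq_zero_of_forall_dotProduct_mul_dotProduct_eq_zero hk, fun h w => ?_⟩
  rw [h, zero_dotProduct, mul_zero]

theorem rank_G_general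
    (u k : Fin 4 → K) (hu : u ≠ 0) (hk : k ≠ 0) :
    Module.finrank K ↥(Submodule.span K (Gfiber (rho u k))) = 12 := by
  rw [Gfiber_rho hk, Submodule.span_eq]
  have h := finrank_ker_vecMulBilin_add (μ := Fin 4) (quadricGrad_ne_zero hu)
  simp only [Fintype.card_fin] at h
  omega

/-- Over a point `φ = ρ(u,k)` of `Z₁ ∩ Z₂`, the intersection `𝒢_φ` of the tangent
spaces to all point conditions has (affine) dimension 12, i.e. the bundle `𝒢`
has projective rank 11. -/
theorem rank_G [IsAlgClosed K] [CharZero K]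
    (u k : Fin 4 → K) (hu : u ≠ 0) (hk : k ≠ 0)
    (hQ : u 0 * u 3 = u 1 * u 2) :
    Module.finrank K ↥(Submodule.span K (Gfiber (rho u k))) = 12 :=
  rank_G_general u k hu hk
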